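/- Let n ≥ 1, k ≥ 1, and let ρ_1,…,ρ_k be permutations of {1,…,n}. Then the integer n(k−1) + 2|Π(ρ_1,…,ρ_k)| − ∑_{i=1}^k #(ρ_i) − #(ρ_1⋯ρ_k) is nonnegative and even. (This is the statement that the Euler characteristic of the k-constellation (ρ_1,…,ρ_k) equals 2|Π| − 2g for a nonnegative integer genus g.) -/

import Mathlib

open Equiv Finset
open scoped Classical

namespace PaperHCIZ

variable {α : Type*}

/-- The partition of `α` into orbits of the subgroup generated by a set of permutations. -/
def orbitSetoid (S : Set (Equiv.Perm α)) : Setoid α where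
  r x y := ∃ g ∈ Subgroup.closure S, g x = y
  iseqv := by
    refine ⟨fun x => ⟨1, Subgroup.one_mem _, rfl⟩, ?_, ?_⟩
    · rintro x y ⟨g, hg, rfl⟩
      exact ⟨g⁻¹, Subgroup.inv_mem _ hg, by simp⟩
    · rintro x y z ⟨g, hg, rfl⟩ ⟨h, hh, rfl⟩
      exact ⟨h * g, Subgroup.mul_mem _ hh hg, Equiv.Perm.mul_apply h g x⟩

/-- `#(ν)`: the number of orbits (disjoint cycles, counting fixed points) of a permutation. -/
noncomputable def numOrbits (ν : Equiv.Perm α) : ℕ :=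
  Nat.card (Quotient (orbitSetoid ({ν} : Set (Equiv.Perm α))))

/-- `‖ν‖ = |α| - #(ν)`: the minimal number of transpositions whose product is `ν`. -/
noncomputable def len (ν : Equiv.Perm α) : ℕ :=
  Nat.card α - numOrbits ν

/-- the number of blocks of a partition -/
noncomputable def numBlocks (π : Setoid α) : ℕ := Nat.card (Quotient π)

/-- `d_p(ν)`: the number of orbits of size `p`. -/
noncomputable def cycleCount (ν : Equiv.Perm α) (p : ℕ) : ℕ :=
  Nat.card {q : Quotient (orbitSetoid ({ν} : Set (Equiv.Perm α))) //
    Nat.card {x : α // Quotient.mk (orbitSetoid ({ν} : Set (Equiv.Perm α))) x = q} = p}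

/-- The restriction of a permutation to a block of a partition whose blocks it stabilizes
(junk value `1` if it does not stabilize the block). -/
noncomputable def blockRestrict (π : Setoid α) (ν : Equiv.Perm α) (q : Quotient π) :
    Equiv.Perm {x : α // Quotient.mk π x = q} :=
  if h : ∀ x : α, Quotient.mk π x = q ↔ Quotient.mk π (ν x) = q
  then ν.subtypePerm (fun x => (h x).symm) else 1

/-- A sequence of transpositions `(p₁ q₁), …, (pₘ qₘ)`, with `pᵢ < qᵢ`, having weakly
monotone maxima `q₁ ≤ q₂ ≤ … ≤ qₘ`. -/
def IsMonotoneSeq {β : Type*} [LinearOrder β] (L : List (Equiv.Perm β)) : Prop :=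
  ∃ pq : List (β × β),
    L = pq.map (fun x => Equiv.swap x.1 x.2) ∧
    (∀ x ∈ pq, x.1 < x.2) ∧
    List.Chain' (· ≤ ·) (pq.map Prod.snd)

/-- The multiset of orbit sizes of a permutation of a finite set. -/
noncomputable def orbitSizes {β : Type*} [Finite β] (ν : Equiv.Perm β) : Multiset ℕ :=
  letI : Fintype (Quotient (orbitSetoid ({ν} : Set (Equiv.Perm β)))) := Fintype.ofFinite _
  (Finset.univ.val).map fun q : Quotient (orbitSetoid ({ν} : Set (Equiv.Perm β))) =>
    Nat.card {x : β // Quotient.mk (orbitSetoid ({ν} : Set (Equiv.Perm β))) x = q}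

variable {n D : ℕ}

/-- The partition `Π(σ,τ)` into orbits of the subgroup generated by all `σ_c, τ_c`. -/
def jointSetoid (σ τ : Fin D → Equiv.Perm (Fin n)) : Setoid (Fin n) :=
  orbitSetoid (Set.range σ ∪ Set.range τ)

/-- `m_C(σ,τ;l,k)` -/
noncomputable def mC (σ τ : Fin D → Equiv.Perm (Fin n)) (l k : ℕ) : ℕ :=
  Nat.card {ρ : Fin D → List (Equiv.Perm (Fin n)) //
    (∀ c, ∀ r ∈ ρ c, r ≠ 1) ∧
    (∀ c, (ρ c).prod = σ c * (τ c)⁻¹) ∧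
    (∑ c, (ρ c).length) = k ∧
    (∑ c, ((ρ c).map len).sum) = l ∧
    orbitSetoid (Set.range σ ∪ Set.range τ ∪ ⋃ c, {r | r ∈ ρ c}) = ⊤}

/-- `p_C(σ,τ;l)` -/
noncomputable def pC (σ τ : Fin D → Equiv.Perm (Fin n)) (l : ℕ) : ℕ :=
  Nat.card {μ : Fin D → List (Equiv.Perm (Fin n)) //
    (∀ c, IsMonotoneSeq (μ c)) ∧
    (∀ c, σ c = (μ c).prod * τ c) ∧
    (∑ c, (μ c).length) = l ∧
    orbitSetoid (Set.range σ ∪ Set.range τ ∪ ⋃ c, {r | r ∈ μ c}) = ⊤}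

/-- `γ_l(ν;k)`: transitive proper factorizations of `ν` into `k` factors of total length `l`. -/
noncomputable def gammaK {β : Type*} (ν : Equiv.Perm β) (l k : ℕ) : ℕ :=
  Nat.card {ρ : List (Equiv.Perm β) //
    ρ.length = k ∧ (∀ r ∈ ρ, r ≠ 1) ∧ ρ.prod = ν ∧
    (ρ.map len).sum = l ∧ orbitSetoid {r | r ∈ ρ} = ⊤}

/-- `γ_l(ν) = ∑_k (-1)^k γ_l(ν;k)` -/
noncomputable def gammaAlt {β : Type*} (ν : Equiv.Perm β) (l : ℕ) : ℤ :=
  ∑ k ∈ Finset.range (l + 1), (-1 : ℤ) ^ k * gammaK ν l k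

/-- `p(ν;l)`: monotone factorizations of `ν` into `l` transpositions. -/
noncomputable def pNum {β : Type*} [LinearOrder β] (ν : Equiv.Perm β) (l : ℕ) : ℕ :=
  Nat.card {L : List (Equiv.Perm β) // L.length = l ∧ IsMonotoneSeq L ∧ L.prod = ν}

/-- `p_C(σ,τ;l)` in the one-color case `D = 1`. -/
noncomputable def pC1 (σ τ : Equiv.Perm (Fin n)) (l : ℕ) : ℕ :=
  Nat.card {μ : List (Equiv.Perm (Fin n)) //
    μ.length = l ∧ IsMonotoneSeq μ ∧ σ = μ.prod * τ ∧
    orbitSetoid ({σ, τ} ∪ {r | r ∈ μ}) = ⊤}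

/-- `m_C(σ,τ;l,k)` in the one-color case `D = 1`. -/
noncomputable def mC1 (σ τ : Equiv.Perm (Fin n)) (l k : ℕ) : ℕ :=
  Nat.card {ρ : List (Equiv.Perm (Fin n)) //
    ρ.length = k ∧ (∀ r ∈ ρ, r ≠ 1) ∧ ρ.prod = σ * τ⁻¹ ∧
    (ρ.map len).sum = l ∧ orbitSetoid ({σ, τ} ∪ {r | r ∈ ρ}) = ⊤}

/-- `h_g(ν)`: genus-`g` monotone single Hurwitz count of a permutation of a finite
linearly ordered set. -/
noncomputable def hg {β : Type*} [LinearOrder β] (ν : Equiv.Perm β) (g : ℕ) : ℕ :=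
  Nat.card {L : List (Equiv.Perm β) //
    L.length = Nat.card β + numOrbits ν + 2 * g - 2 ∧
    IsMonotoneSeq L ∧ L.prod = ν ∧ orbitSetoid {r | r ∈ L} = ⊤}


section EulerAux

variable {β : Type*}

open Equiv

lemma rel_of_mem_gen {S : Set (Equiv.Perm β)} {g : Equiv.Perm β} (hg : g ∈ S) (x : β) :
    (orbitSetoid S).r x (g x) :=
  ⟨g, Subgroup.subset_closure hg, rfl⟩

lemma rel_of_sameCycle {S : Set (Equiv.Perm β)} {g : Equiv.Perm β}
    (hg : g ∈ Subgroup.closure S) {x y : β} (h : g.SameCycle x y) :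
    (orbitSetoid S).r x y := by
  obtain ⟨k, hk⟩ := h
  exact ⟨g ^ k, Subgroup.zpow_mem _ hg k, hk⟩

lemma orbitSetoid_le_of_gen {S : Set (Equiv.Perm β)} {t : Setoid β}
    (h : ∀ g ∈ S, ∀ x, t.r x (g x)) : ∀ x y, (orbitSetoid S).r x y → t.r x y := by
  have key : ∀ g ∈ Subgroup.closure S, ∀ x, t.r x (g x) := by
    intro g hg
    induction hg using Subgroup.closure_induction with
    | mem g hg => exact h g hg
    | one => exact fun x => t.refl' x
    | mul g k hg hk ihg ihk => exact fun x => t.trans' (ihk x) (ihg (k x))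
    | inv g hg ih =>
      intro x
      have := ih (g⁻¹ x)
      rw [← Equiv.Perm.mul_apply, mul_inv_cancel, Equiv.Perm.one_apply] at this
      exact t.symm' this
  rintro x y ⟨g, hg, rfl⟩
  exact key g hg x

lemma orbitSetoid_rel_mono {S T : Set (Equiv.Perm β)} (h : S ⊆ T) :
    ∀ x y, (orbitSetoid S).r x y → (orbitSetoid T).r x y :=
  orbitSetoid_le_of_gen fun g hg x => rel_of_mem_gen (h hg) x

lemma orbit_single {σ : Equiv.Perm β} {x y : β} :
    (orbitSetoid ({σ} : Set (Equiv.Perm β))).r x y ↔ σ.SameCycle x y := by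
  constructor
  · rintro ⟨g, hg, rfl⟩
    obtain ⟨k, rfl⟩ := Subgroup.mem_closure_singleton.1 hg
    exact ⟨k, rfl⟩
  · rintro ⟨k, hk⟩
    exact ⟨σ ^ k, Subgroup.mem_closure_singleton.2 ⟨k, rfl⟩, hk⟩

lemma prod_mem_closure (ρ : List (Equiv.Perm β)) :
    ρ.prod ∈ Subgroup.closure {r | r ∈ ρ} :=
  Subgroup.list_prod_mem _ fun x hx => Subgroup.subset_closure hx

lemma numBlocks_le [Finite β] {s t : Setoid β} (h : ∀ x y, s.r x y → t.r x y) :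
    numBlocks t ≤ numBlocks s := by
  have hs : Function.Surjective
      (Quotient.map' id (fun a b hab => h a b hab) : Quotient s → Quotient t) := by
    intro q
    induction q using Quotient.ind
    exact ⟨Quotient.mk'' _, rfl⟩
  exact Nat.card_le_card_of_surjective _ hs

lemma numBlocks_le_card [Finite β] (s : Setoid β) : numBlocks s ≤ Nat.card β :=
  Nat.card_le_card_of_surjective (Quotient.mk s) (Quotient.mk_surjective)

lemma numBlocks_eq_card_of_eq {s : Setoid β} (h : ∀ x y, s.r x y ↔ x = y) :
    numBlocks s = Nat.card β := by
  refine (Nat.card_eq_of_bijective (Quotient.mk s) ⟨fun x y hxy => ?_, Quotient.mk_surjective⟩).symm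
  exact (h x y).1 (Quotient.eq''.1 hxy)

lemma numOrbits_one [Finite β] : numOrbits (1 : Equiv.Perm β) = Nat.card β := by
  refine numBlocks_eq_card_of_eq fun x y => ?_
  rw [orbit_single]
  constructor
  · rintro ⟨k, hk⟩
    simpa using hk
  · rintro rfl
    exact ⟨1, by simp⟩

end EulerAux
section EulerAux2

variable {β : Type*}

open Equiv

lemma rel_swap_of_rel {t : Setoid β} [DecidableEq β] {a b : β}
    (hab : t.r a b) (x : β) : t.r x (Equiv.swap a b x) := by
  rcases eq_or_ne x a with rfl | hxa
  · rwa [Equiv.swap_apply_left]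
  rcases eq_or_ne x b with rfl | hxb
  · rw [Equiv.swap_apply_right]; exact t.symm' hab
  · rw [Equiv.swap_apply_of_ne_of_ne hxa hxb]

/-- N2: adding one transposition to the generating set decreases the number of blocks
by at most one. -/
lemma numBlocks_le_insert_swap_add_one [Finite β] [DecidableEq β]
    (S : Set (Equiv.Perm β)) (a b : β) :
    numBlocks (orbitSetoid S) ≤
      numBlocks (orbitSetoid (insert (Equiv.swap a b) S)) + 1 := by
  classical
  set s := orbitSetoid S with hs
  set t := orbitSetoid (insert (Equiv.swap a b) S) with ht
  -- characterization of t in terms of s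
  have hchar : ∀ x y, t.r x y →
      (s.r x y ∨ ((s.r x a ∨ s.r x b) ∧ (s.r y a ∨ s.r y b))) := by
    set s' : Setoid β :=
      { r := fun x y => s.r x y ∨ ((s.r x a ∨ s.r x b) ∧ (s.r y a ∨ s.r y b))
        iseqv := by
          refine ⟨fun x => Or.inl (s.refl' x), ?_, ?_⟩
          · rintro x y (h | ⟨h1, h2⟩)
            · exact Or.inl (s.symm' h)
            · exact Or.inr ⟨h2, h1⟩
          · rintro x y z (h | ⟨h1, h2⟩) (h' | ⟨h1', h2'⟩)
            · exact Or.inl (s.trans' h h')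
            · exact Or.inr ⟨h1'.imp (s.trans' h) (s.trans' h), h2'⟩
            · exact Or.inr ⟨h1, h2.imp (fun hh => s.trans' (s.symm' h') hh)
                (fun hh => s.trans' (s.symm' h') hh)⟩
            · exact Or.inr ⟨h1, h2'⟩ } with hs'
    refine orbitSetoid_le_of_gen (S := insert (Equiv.swap a b) S) (t := s') ?_
    rintro g (rfl | hg) x
    · rcases eq_or_ne x a with rfl | hxa
      · rw [Equiv.swap_apply_left]
        exact Or.inr ⟨Or.inl (s.refl' x), Or.inr (s.refl' b)⟩
      rcases eq_or_ne x b with rfl | hxb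
      · rw [Equiv.swap_apply_right]
        exact Or.inr ⟨Or.inr (s.refl' x), Or.inl (s.refl' a)⟩
      · rw [Equiv.swap_apply_of_ne_of_ne hxa hxb]
    · exact Or.inl (rel_of_mem_gen hg x)
  -- the natural surjection from blocks of s to blocks of t
  set f : Quotient s → Quotient t :=
    Quotient.map' id (fun x y hxy =>
      orbitSetoid_rel_mono (Set.subset_insert _ _) x y hxy) with hf
  have hfm : ∀ x : β, f (Quotient.mk s x) = Quotient.mk t x := fun x => rfl
  set F : Quotient s → Quotient t ⊕ Unit := fun z =>
    if z = Quotient.mk s a then Sum.inr () else Sum.inl (f z) with hF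
  have hFinj : Function.Injective F := by
    intro z w
    refine Quotient.inductionOn₂ z w (fun x y hzw => ?_)
    simp only [hF] at hzw
    by_cases hza : (Quotient.mk s x) = Quotient.mk s a
    · by_cases hwa : (Quotient.mk s y) = Quotient.mk s a
      · rw [hza, hwa]
      · rw [if_pos hza, if_neg hwa] at hzw
        exact absurd hzw (by simp)
    · by_cases hwa : (Quotient.mk s y) = Quotient.mk s a
      · rw [if_neg hza, if_pos hwa] at hzw
        exact absurd hzw (by simp)
      · rw [if_neg hza, if_neg hwa] at hzw
        simp only [Sum.inl.injEq] at hzw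
        rw [hfm, hfm] at hzw
        have hr : t.r x y := Quotient.eq''.1 hzw
        rcases hchar x y hr with h | ⟨h1 | h1, h2 | h2⟩
        · exact Quotient.sound' h
        · exact absurd (Quotient.sound' h1) hza
        · exact absurd (Quotient.sound' h1) hza
        · exact absurd (Quotient.sound' h2) hwa
        · exact Quotient.sound' (s.trans' h1 (s.symm' h2))
  calc numBlocks s ≤ Nat.card (Quotient t ⊕ Unit) :=
        Nat.card_le_card_of_injective F hFinj
    _ = numBlocks t + 1 := by simp [Nat.card_sum, numBlocks]

/-- N3: adding a transposition between two elements in different blocks strictly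
decreases the number of blocks. -/
lemma numBlocks_insert_swap_lt [Finite β] [DecidableEq β] {S : Set (Equiv.Perm β)} {a b : β}
    (hab : ¬ (orbitSetoid S).r a b) :
    numBlocks (orbitSetoid (insert (Equiv.swap a b) S)) < numBlocks (orbitSetoid S) := by
  classical
  set s := orbitSetoid S
  set t := orbitSetoid (insert (Equiv.swap a b) S)
  set f : Quotient s → Quotient t :=
    Quotient.map' id (fun x y hxy =>
      orbitSetoid_rel_mono (Set.subset_insert _ _) x y hxy) with hf
  have hsurj : Function.Surjective f := fun q =>
    Quotient.inductionOn q fun x => ⟨Quotient.mk s x, rfl⟩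
  have hninj : ¬ Function.Injective f := by
    intro hinj
    have h1 : f (Quotient.mk s a) = f (Quotient.mk s b) := by
      have : t.r a b := ⟨Equiv.swap a b, Subgroup.subset_closure (Set.mem_insert _ _),
        Equiv.swap_apply_left a b⟩
      exact Quotient.sound' this
    exact hab (Quotient.exact' (hinj h1))
  letI : Fintype (Quotient s) := Fintype.ofFinite _
  letI : Fintype (Quotient t) := Fintype.ofFinite _
  simpa only [numBlocks, Nat.card_eq_fintype_card] using
    Fintype.card_lt_of_surjective_not_injective f hsurj hninj

end EulerAux2
section EulerAux3

variable {β : Type*} [Finite β] [DecidableEq β]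

open Equiv

lemma swap_mul_pow_apply {σ : Equiv.Perm β} {a b x : β} {j : ℕ}
    (h : ∀ i, 1 ≤ i → i ≤ j → (σ ^ i) x ≠ a ∧ (σ ^ i) x ≠ b) :
    ((Equiv.swap a b * σ) ^ j) x = (σ ^ j) x := by
  induction j with
  | zero => rfl
  | succ j ih =>
    have ih' := ih fun i h1 h2 => h i h1 (h2.trans (Nat.le_succ j))
    have hj := h (j + 1) (Nat.le_add_left 1 j) le_rfl
    rw [pow_succ', Equiv.Perm.mul_apply] at hj
    rw [pow_succ', pow_succ', Equiv.Perm.mul_apply, ih', Equiv.Perm.mul_apply,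
      Equiv.Perm.mul_apply, Equiv.swap_apply_of_ne_of_ne hj.1 hj.2]

lemma pow_apply_mod {g : Equiv.Perm β} {x : β} {m : ℕ} (hm : (g ^ m) x = x) (k : ℕ) :
    (g ^ k) x = (g ^ (k % m)) x := by
  conv_lhs => rw [← Nat.mod_add_div k m]
  rw [pow_add, Equiv.Perm.mul_apply]
  congr 1
  rw [pow_mul]
  induction (k / m) with
  | zero => rfl
  | succ q ih => rw [pow_succ, Equiv.Perm.mul_apply, hm, ih]

/-- In the merge case, `b` and `a` lie on the same cycle of `swap a b * σ`. -/
lemma sameCycle_swap_mul_self {σ : Equiv.Perm β} {a b : β}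
    (hab : ¬ σ.SameCycle a b) : (Equiv.swap a b * σ).SameCycle b a := by
  have hex : ∃ k, 0 < k ∧ (σ ^ k) b = b := by
    obtain ⟨i, hi, hi2, hi3⟩ := (Equiv.Perm.SameCycle.refl σ b).exists_pow_eq''
    exact ⟨i, hi, hi3⟩
  classical
  set m := Nat.find hex with hmdef
  obtain ⟨hm0, hmb⟩ := Nat.find_spec hex
  have hne : ∀ i, 1 ≤ i → i ≤ m - 1 → (σ ^ i) b ≠ a ∧ (σ ^ i) b ≠ b := by
    intro i h1 h2
    constructor
    · intro he
      exact hab (Equiv.Perm.SameCycle.symm ⟨(i : ℤ), by rw [zpow_natCast, he]⟩)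
    · intro he
      exact Nat.find_min hex (by omega : i < m) ⟨h1, he⟩
  have hstep : ((Equiv.swap a b * σ) ^ m) b = a := by
    have h1 : ((Equiv.swap a b * σ) ^ (m - 1)) b = (σ ^ (m - 1)) b :=
      swap_mul_pow_apply hne
    have : m = (m - 1) + 1 := by omega
    rw [this, pow_succ', Equiv.Perm.mul_apply, h1, Equiv.Perm.mul_apply]
    have h2 : σ ((σ ^ (m - 1)) b) = (σ ^ m) b := by
      rw [← Equiv.Perm.mul_apply, ← pow_succ']; congr 2; omega
    rw [h2, hmb, Equiv.swap_apply_right]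
  exact ⟨(m : ℤ), by rw [zpow_natCast, hstep]⟩

/-- In the merge case, `swap a b * σ` connects `x` to `σ x` for every `x`. -/
lemma sameCycle_swap_mul_apply {σ : Equiv.Perm β} {a b : β}
    (hab : ¬ σ.SameCycle a b) (x : β) : (Equiv.swap a b * σ).SameCycle x (σ x) := by
  have h1 : (Equiv.swap a b * σ).SameCycle x ((Equiv.swap a b * σ) x) :=
    ⟨1, by simp⟩
  rcases eq_or_ne (σ x) a with ha | ha
  · have h2 : (Equiv.swap a b * σ) x = b := by
      rw [Equiv.Perm.mul_apply, ha, Equiv.swap_apply_left]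
    rw [h2] at h1
    exact h1.trans ((sameCycle_swap_mul_self hab).trans (by rw [ha]))
  rcases eq_or_ne (σ x) b with hb | hb
  · have h2 : (Equiv.swap a b * σ) x = a := by
      rw [Equiv.Perm.mul_apply, hb, Equiv.swap_apply_right]
    rw [h2] at h1
    exact h1.trans ((sameCycle_swap_mul_self hab).symm.trans (by rw [hb]))
  · have h2 : (Equiv.swap a b * σ) x = σ x := by
      rw [Equiv.Perm.mul_apply, Equiv.swap_apply_of_ne_of_ne ha hb]
    rwa [h2] at h1

/-- Merging two cycles strictly decreases the number of orbits. -/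
lemma numOrbits_swap_mul_lt {σ : Equiv.Perm β} {a b : β}
    (hab : ¬ σ.SameCycle a b) :
    numOrbits (Equiv.swap a b * σ) < numOrbits σ := by
  have h1 : numOrbits (Equiv.swap a b * σ) ≤
      numBlocks (orbitSetoid (insert (Equiv.swap a b) ({σ} : Set (Equiv.Perm β)))) := by
    refine numBlocks_le (orbitSetoid_le_of_gen ?_)
    rintro g (rfl | rfl) x
    · refine rel_swap_of_rel ?_ x
      exact orbit_single.2 (sameCycle_swap_mul_self hab).symm
    · exact orbit_single.2 (sameCycle_swap_mul_apply hab x)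
  have h2 := numBlocks_insert_swap_lt (S := ({σ} : Set (Equiv.Perm β))) (a := a) (b := b)
    (fun hr => hab (orbit_single.1 hr))
  exact lt_of_le_of_lt h1 h2

/-- Splitting: if `a` and `b` are on the same cycle of `σ`, they are on different
cycles of `swap a b * σ`. -/
lemma not_sameCycle_swap_mul {σ : Equiv.Perm β} {a b : β} (hab : a ≠ b)
    (h : σ.SameCycle a b) : ¬ (Equiv.swap a b * σ).SameCycle a b := by
  classical
  have hex : ∃ k, 0 < k ∧ (σ ^ k) a = b := by
    obtain ⟨i, hi, hi2, hi3⟩ := h.exists_pow_eq''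
    exact ⟨i, hi, hi3⟩
  set m := Nat.find hex with hmdef
  obtain ⟨hm0, hmb⟩ := Nat.find_spec hex
  have hne : ∀ i, 1 ≤ i → i ≤ m - 1 → (σ ^ i) a ≠ a ∧ (σ ^ i) a ≠ b := by
    intro i h1 h2
    constructor
    · intro he
      have : (σ ^ (m - i)) a = b := by
        have : (σ ^ (m - i)) ((σ ^ i) a) = (σ ^ m) a := by
          rw [← Equiv.Perm.mul_apply, ← pow_add]; congr 2; omega
        rw [he] at this; rw [this, hmb]
      exact Nat.find_min hex (by omega : m - i < m) ⟨by omega, this⟩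
    · intro he
      exact Nat.find_min hex (by omega : i < m) ⟨h1, he⟩
  have hpow : ∀ j, j ≤ m - 1 → ((Equiv.swap a b * σ) ^ j) a = (σ ^ j) a := by
    intro j hj
    exact swap_mul_pow_apply fun i h1 h2 => hne i h1 (h2.trans hj)
  have hper : ((Equiv.swap a b * σ) ^ m) a = a := by
    have h1 := hpow (m - 1) le_rfl
    have : m = (m - 1) + 1 := by omega
    rw [this, pow_succ', Equiv.Perm.mul_apply, h1, Equiv.Perm.mul_apply]
    have h2 : σ ((σ ^ (m - 1)) a) = (σ ^ m) a := by
      rw [← Equiv.Perm.mul_apply, ← pow_succ']; congr 2; omega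
    rw [h2, hmb, Equiv.swap_apply_right]
  intro hcon
  obtain ⟨i, hi0, hi2, hi3⟩ := hcon.exists_pow_eq''
  rw [pow_apply_mod hper i] at hi3
  have him : i % m < m := Nat.mod_lt _ hm0
  rcases Nat.eq_zero_or_pos (i % m) with hz | hz
  · rw [hz] at hi3; exact hab hi3
  · rw [hpow (i % m) (by omega)] at hi3
    exact Nat.find_min hex him ⟨hz, hi3⟩

end EulerAux3
section EulerAux4

variable {β : Type*} [Finite β] [DecidableEq β]

open Equiv

lemma numBlocks_orbitSetoid_congr {S T : Set (Equiv.Perm β)}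
    (h1 : ∀ g ∈ S, ∀ x, (orbitSetoid T).r x (g x))
    (h2 : ∀ g ∈ T, ∀ x, (orbitSetoid S).r x (g x)) :
    numBlocks (orbitSetoid S) = numBlocks (orbitSetoid T) :=
  le_antisymm (numBlocks_le (orbitSetoid_le_of_gen h2))
    (numBlocks_le (orbitSetoid_le_of_gen h1))

set_option maxHeartbeats 1000000 in
lemma numOrbits_swap_mul_le (σ : Equiv.Perm β) (a b : β) :
    numOrbits (Equiv.swap a b * σ) ≤ numOrbits σ + 1 := by
  have h1 := numBlocks_le_insert_swap_add_one
    ({Equiv.swap a b * σ} : Set (Equiv.Perm β)) a b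
  have h2 : numBlocks (orbitSetoid
        (insert (Equiv.swap a b) ({Equiv.swap a b * σ} : Set (Equiv.Perm β)))) ≤
      numBlocks (orbitSetoid ({σ} : Set (Equiv.Perm β))) := by
    refine numBlocks_le (orbitSetoid_le_of_gen ?_)
    intro g hg x
    rw [Set.mem_singleton_iff] at hg
    rw [hg]
    have e1 : (orbitSetoid (insert (Equiv.swap a b)
          ({Equiv.swap a b * σ} : Set (Equiv.Perm β)))).r x ((Equiv.swap a b * σ) x) :=
      rel_of_mem_gen (Set.mem_insert_of_mem _ (Set.mem_singleton _)) x
    have e2 := rel_of_mem_gen (Set.mem_insert (Equiv.swap a b)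
      ({Equiv.swap a b * σ} : Set (Equiv.Perm β))) ((Equiv.swap a b * σ) x)
    have e3 : Equiv.swap a b ((Equiv.swap a b * σ) x) = σ x := by
      rw [Equiv.Perm.mul_apply, Equiv.swap_apply_self]
    rw [e3] at e2
    exact (orbitSetoid _).trans' e1 e2
  show numBlocks (orbitSetoid ({Equiv.swap a b * σ} : Set (Equiv.Perm β))) ≤
    numBlocks (orbitSetoid ({σ} : Set (Equiv.Perm β))) + 1
  omega

lemma numOrbits_swap_mul_of_sameCycle {σ : Equiv.Perm β} {a b : β} (hab : a ≠ b)
    (h : σ.SameCycle a b) :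
    numOrbits (Equiv.swap a b * σ) = numOrbits σ + 1 := by
  have h1 := numOrbits_swap_mul_le σ a b
  have h2 := numOrbits_swap_mul_lt (not_sameCycle_swap_mul hab h)
  rw [← mul_assoc, Equiv.swap_mul_self, one_mul] at h2
  omega

lemma numOrbits_swap_mul_of_not_sameCycle {σ : Equiv.Perm β} {a b : β}
    (h : ¬ σ.SameCycle a b) :
    numOrbits (Equiv.swap a b * σ) + 1 = numOrbits σ := by
  have h1 := numOrbits_swap_mul_lt h
  have h2 := numOrbits_swap_mul_le (Equiv.swap a b * σ) a b
  rw [← mul_assoc, Equiv.swap_mul_self, one_mul] at h2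
  omega

lemma numBlocks_nil :
    numBlocks (orbitSetoid {r : Equiv.Perm β | r ∈ ([] : List (Equiv.Perm β))}) =
      Nat.card β := by
  refine numBlocks_eq_card_of_eq fun x y => ?_
  constructor
  · rintro ⟨g, hg, rfl⟩
    have hS : {r : Equiv.Perm β | r ∈ ([] : List (Equiv.Perm β))} = ∅ := by ext g; simp
    rw [hS, Subgroup.closure_empty, Subgroup.mem_bot] at hg
    rw [hg]; rfl
  · rintro rfl
    exact (orbitSetoid _).refl' x

lemma len_one : len (1 : Equiv.Perm β) = 0 := by
  simp [len, numOrbits_one]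

lemma euler_main :
    ∀ (N : ℕ) (ρ : List (Equiv.Perm β)), (ρ.map len).sum + ρ.length ≤ N →
      Nat.card β + numOrbits ρ.prod ≤
          (ρ.map len).sum + 2 * numBlocks (orbitSetoid {r | r ∈ ρ}) ∧
        Even ((ρ.map len).sum + len ρ.prod) := by
  intro N
  induction N with
  | zero =>
    intro ρ hρ
    have hnil : ρ = [] := List.length_eq_zero_iff.1 (by omega)
    subst hnil
    simp only [List.map_nil, List.sum_nil, List.prod_nil, zero_add, len_one]
    rw [numOrbits_one, numBlocks_nil]
    exact ⟨by omega, Even.zero⟩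
  | succ N IH =>
    intro ρ hρ
    cases ρ with
    | nil =>
      simp only [List.map_nil, List.sum_nil, List.prod_nil, zero_add, len_one]
      rw [numOrbits_one, numBlocks_nil]
      exact ⟨by omega, Even.zero⟩
    | cons π ρ' =>
      by_cases hπ1 : π = 1
      · subst hπ1
        obtain ⟨ih1, ih2⟩ := IH ρ' (by
          simp only [List.map_cons, List.sum_cons, List.length_cons, len_one] at hρ ⊢
          omega)
        have hsum : ((1 :: ρ').map len).sum = (ρ'.map len).sum := by
          simp [len_one]
        have hprod : (1 :: ρ').prod = ρ'.prod := by simp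
        have hblocks : numBlocks (orbitSetoid {r | r ∈ (1 : Equiv.Perm β) :: ρ'}) =
            numBlocks (orbitSetoid {r | r ∈ ρ'}) := by
          refine numBlocks_orbitSetoid_congr ?_ ?_
          · intro g hg x
            simp only [Set.mem_setOf_eq, List.mem_cons] at hg
            rcases hg with rfl | hg
            · exact (orbitSetoid _).refl' x
            · exact rel_of_mem_gen hg x
          · intro g hg x
            exact rel_of_mem_gen (by simp only [Set.mem_setOf_eq, List.mem_cons]; exact Or.inr hg) x
        rw [hsum, hprod, hblocks]
        exact ⟨ih1, ih2⟩
      · -- π ≠ 1 : peel one transposition off π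
        have hmove : ∃ a, π a ≠ a := by
          by_contra hc
          push_neg at hc
          exact hπ1 (Equiv.ext fun x => by simpa using hc x)
        obtain ⟨a, ha⟩ := hmove
        set b := π a with hb
        have hab : a ≠ b := Ne.symm ha
        set τ := Equiv.swap a b with hτ
        set π' := τ * π with hπ'
        have hππ' : π = τ * π' := by
          rw [hπ', ← mul_assoc, hτ, Equiv.swap_mul_self, one_mul]
        have hπ'a : π' a = a := by
          rw [hπ', Equiv.Perm.mul_apply, ← hb, hτ, Equiv.swap_apply_right]
        have hnotsc : ¬ π'.SameCycle a b := by
          rintro ⟨k, hk⟩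
          rw [Equiv.Perm.zpow_apply_eq_self_of_apply_eq_self hπ'a k] at hk
          exact hab hk
        have hNOπ : numOrbits π + 1 = numOrbits π' := by
          have h1 := numOrbits_swap_mul_of_not_sameCycle hnotsc
          rw [← hτ, ← hππ'] at h1
          exact h1
        have hπ'card : numOrbits π' ≤ Nat.card β := numBlocks_le_card _
        have hlenπ : len π = len π' + 1 := by
          simp only [len]; omega
        obtain ⟨ih1, ih2⟩ := IH (π' :: ρ') (by
          simp only [List.map_cons, List.sum_cons, List.length_cons] at hρ ⊢
          omega)
        have hprodeq : (π :: ρ').prod = τ * (π' :: ρ').prod := by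
          simp only [List.prod_cons, ← mul_assoc, ← hππ']
        have hprodcard : numOrbits (π :: ρ').prod ≤ Nat.card β := numBlocks_le_card _
        have hσ''card : numOrbits (π' :: ρ').prod ≤ Nat.card β := numBlocks_le_card _
        have hsum : ((π :: ρ').map len).sum = ((π' :: ρ').map len).sum + 1 := by
          simp only [List.map_cons, List.sum_cons, hlenπ]; omega
        -- auxiliary facts about the generated partitions
        have hrelπ' : ∀ x, (orbitSetoid {r | r ∈ π :: ρ'}).r x (π' x) := by
          intro x
          have hrab : (orbitSetoid {r | r ∈ π :: ρ'}).r a b := by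
            have := rel_of_mem_gen (S := {r | r ∈ π :: ρ'}) (g := π) (by simp) a
            rwa [← hb] at this
          have e1 : (orbitSetoid {r | r ∈ π :: ρ'}).r x (π x) :=
            rel_of_mem_gen (by simp) x
          have e2 := rel_swap_of_rel hrab (π x)
          have e3 : π' x = Equiv.swap a b (π x) := by
            rw [hπ', Equiv.Perm.mul_apply, hτ]
          rw [e3]
          exact (orbitSetoid _).trans' e1 e2
        have hrelτA : ∀ x, (orbitSetoid {r | r ∈ π :: ρ'}).r x (τ x) := by
          intro x
          have hrab : (orbitSetoid {r | r ∈ π :: ρ'}).r a b := by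
            have := rel_of_mem_gen (S := {r | r ∈ π :: ρ'}) (g := π) (by simp) a
            rwa [← hb] at this
          rw [hτ]
          exact rel_swap_of_rel hrab x
        -- the partition generated by `π :: ρ'` is the partition generated by
        -- `τ, π', ρ'`
        have hblocksB : numBlocks (orbitSetoid {r | r ∈ π :: ρ'}) =
            numBlocks (orbitSetoid (insert τ {r | r ∈ π' :: ρ'})) := by
          refine numBlocks_orbitSetoid_congr ?_ ?_
          · intro g hg x
            simp only [Set.mem_setOf_eq, List.mem_cons] at hg
            rcases hg with rfl | hg
            · -- g = π = τ * π'
              have e1 : (orbitSetoid (insert τ {r | r ∈ π' :: ρ'})).r x (π' x) :=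
                rel_of_mem_gen (Set.mem_insert_of_mem _ (by simp)) x
              have e2 := rel_of_mem_gen (Set.mem_insert τ {r | r ∈ π' :: ρ'}) (π' x)
              have e3 : g x = τ (π' x) := by rw [hππ', Equiv.Perm.mul_apply]
              rw [e3]
              exact (orbitSetoid _).trans' e1 e2
            · exact rel_of_mem_gen (Set.mem_insert_of_mem _ (by simp only [Set.mem_setOf_eq, List.mem_cons]; exact Or.inr hg)) x
          · intro g hg x
            rw [Set.mem_insert_iff] at hg
            rcases hg with rfl | hg
            · exact hrelτA x
            · simp only [Set.mem_setOf_eq, List.mem_cons] at hg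
              rcases hg with rfl | hg
              · exact hrelπ' x
              · exact rel_of_mem_gen (by simp only [Set.mem_setOf_eq, List.mem_cons]; exact Or.inr hg) x
        by_cases hsc : Equiv.Perm.SameCycle (π' :: ρ').prod a b
        · -- split case
          have hnum : numOrbits (π :: ρ').prod = numOrbits (π' :: ρ').prod + 1 := by
            rw [hprodeq, hτ]
            exact numOrbits_swap_mul_of_sameCycle hab hsc
          have hblocks : numBlocks (orbitSetoid {r | r ∈ π :: ρ'}) =
              numBlocks (orbitSetoid {r | r ∈ π' :: ρ'}) := by
            rw [hblocksB]
            refine numBlocks_orbitSetoid_congr ?_ ?_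
            · intro g hg x
              rw [Set.mem_insert_iff] at hg
              rcases hg with rfl | hg
              · -- g = τ
                have hrab : (orbitSetoid {r | r ∈ π' :: ρ'}).r a b :=
                  rel_of_sameCycle (prod_mem_closure (π' :: ρ')) hsc
                rw [hτ]
                exact rel_swap_of_rel hrab x
              · exact rel_of_mem_gen hg x
            · intro g hg x
              exact rel_of_mem_gen (Set.mem_insert_of_mem _ hg) x
          refine ⟨?_, ?_⟩
          · rw [hsum, hnum, hblocks]
            omega
          · rw [hsum]
            rw [Nat.even_iff] at ih2 ⊢
            simp only [len] at ih2 ⊢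
            omega
        · -- merge case
          have hnum : numOrbits (π :: ρ').prod + 1 = numOrbits (π' :: ρ').prod := by
            rw [hprodeq, hτ]
            exact numOrbits_swap_mul_of_not_sameCycle hsc
          have hblocks : numBlocks (orbitSetoid {r | r ∈ π' :: ρ'}) ≤
              numBlocks (orbitSetoid {r | r ∈ π :: ρ'}) + 1 := by
            rw [hblocksB, hτ]
            exact numBlocks_le_insert_swap_add_one _ a b
          refine ⟨?_, ?_⟩
          · rw [hsum]
            omega
          · rw [hsum]
            rw [Nat.even_iff] at ih2 ⊢
            simp only [len] at ih2 ⊢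
            omega

end EulerAux4
section EulerAux5

variable {β : Type*} [Finite β] [DecidableEq β]

lemma len_add_numOrbits (σ : Equiv.Perm β) : len σ + numOrbits σ = Nat.card β := by
  have h : numOrbits σ ≤ Nat.card β := numBlocks_le_card _
  simp only [len]
  omega

lemma sum_len_numOrbits (ρ : List (Equiv.Perm β)) :
    (ρ.map len).sum + (ρ.map numOrbits).sum = ρ.length * Nat.card β := by
  induction ρ with
  | nil => simp
  | cons π ρ' ih =>
    have h := len_add_numOrbits π
    simp only [List.map_cons, List.sum_cons, List.length_cons]
    rw [Nat.succ_mul]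
    omega

end EulerAux5

/-- the Euler-characteristic defect
`n(k−1) + 2|Π(ρ₁,…,ρ_k)| − ∑ᵢ #(ρᵢ) − #(ρ₁⋯ρ_k)` of a `k`-constellation is a
nonnegative even integer `2g`. -/
theorem statement17 {n : ℕ} (hn : 1 ≤ n) (ρ : List (Equiv.Perm (Fin n)))
    (hk : 1 ≤ ρ.length) :
    ∃ g : ℕ,
      (n : ℤ) * ((ρ.length : ℤ) - 1)
        + 2 * (numBlocks (orbitSetoid {r | r ∈ ρ}) : ℤ)
        - ((ρ.map numOrbits).sum : ℤ)
        - (numOrbits ρ.prod : ℤ)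
      = 2 * (g : ℤ) := by
  classical
  obtain ⟨h1, h2⟩ := euler_main (β := Fin n) ((ρ.map len).sum + ρ.length) ρ le_rfl
  have hcard : Nat.card (Fin n) = n := by simp
  have hsum := sum_len_numOrbits ρ
  have hno : numOrbits ρ.prod ≤ n := by
    have := numBlocks_le_card (β := Fin n)
      (orbitSetoid ({ρ.prod} : Set (Equiv.Perm (Fin n))))
    rw [hcard] at this
    exact this
  obtain ⟨m, hm⟩ := h2
  rw [hcard] at h1 hsum
  have hlen : len ρ.prod = n - numOrbits ρ.prod := by
    simp only [len, hcard]
  rw [hlen] at hm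
  set L := (ρ.map len).sum with hL
  set c := numBlocks (orbitSetoid {r | r ∈ ρ}) with hc
  set P := numOrbits ρ.prod with hP
  set Q := (ρ.map numOrbits).sum with hQ
  set k := ρ.length with hk2
  -- h1 : n + P ≤ L + 2 * c, hm : L + (n - P) = m + m, hsum : L + Q = k * n
  have hge : n ≤ m + c := by omega
  have h1z : (n : ℤ) + (P : ℤ) ≤ (L : ℤ) + 2 * (c : ℤ) := by exact_mod_cast h1
  have hmz : (L : ℤ) + ((n : ℤ) - (P : ℤ)) = (m : ℤ) + (m : ℤ) := by
    zify [hno] at hm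
    exact hm
  have hsumz : (L : ℤ) + (Q : ℤ) = (k : ℤ) * (n : ℤ) := by exact_mod_cast hsum
  refine ⟨m + c - n, ?_⟩
  have hgz : ((m + c - n : ℕ) : ℤ) = (m : ℤ) + (c : ℤ) - (n : ℤ) := by
    rw [Nat.cast_sub hge]
    push_cast
    ring
  rw [hgz]
  linarith

end PaperHCIZ
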